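/- arXiv:1811.00874 — 2 statements merged into one kernel-verified Lean document; each statement's English description precedes it below -/
import Mathlib

section
/- Let λ ≥ 1, let f : [a,b] → ℂ be continuous with absolutely integrable derivative, and let u : [a,b] → ℝ be C¹ with |u'(t)| ≥ 1 for all t ∈ (a,b) and u' monotone on (a,b). Then |∫_a^b f(t) e^{iλu(t)} dt| ≤ 3λ⁻¹ (|f(b)| + ∫_a^b |f'(t)| dt). -/
/-!
Write `e^{iλu} = (1/u') · (u' e^{iλu})`. Every partial integral of `u' e^{iλu}` equals
`(e^{iλu(t)} - e^{iλu(s)}) / (iλ)`, so it has norm at most `2/λ`, while `1/u'` is monotone, of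
constant sign and bounded by `1`. An Abel-summation (second mean value) bound for monotone weights,
proved by Fubini against the Stieltjes measure of the weight, gives `‖∫_a^x e^{iλu}‖ ≤ 2/λ` for
every `x`. Integrating by parts against `f` then yields the bound with constant `2 ≤ 3`.
-/

open Set MeasureTheory Complex

theorem MonotoneOn.Icc_of_Ioo {α β : Type*} [LinearOrder α] [TopologicalSpace α] [OrderTopology α]
    [DenselyOrdered α] [LinearOrder β] [TopologicalSpace β] [OrderClosedTopology β]
    {f : α → β} {a b : α} (hab : a < b) (hf : MonotoneOn f (Ioo a b))
    (hc : ContinuousOn f (Icc a b)) : MonotoneOn f (Icc a b) := by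
  have hIco : MonotoneOn f (Ico a b) := by
    rw [← Ioo_insert_left hab]
    refine hf.insert_of_continuousWithinAt ?_
      ((hc a (left_mem_Icc.2 hab.le)).mono Ioo_subset_Icc_self)
    rw [← mem_closure_iff_clusterPt, closure_Ioo hab.ne]
    exact left_mem_Icc.2 hab.le
  rw [← Ico_insert_right hab.le]
  refine hIco.insert_of_continuousWithinAt ?_
    ((hc b (right_mem_Icc.2 hab.le)).mono Ico_subset_Icc_self)
  rw [← mem_closure_iff_clusterPt, closure_Ico hab.ne]
  exact right_mem_Icc.2 hab.le

theorem AntitoneOn.Icc_of_Ioo {α β : Type*} [LinearOrder α] [TopologicalSpace α] [OrderTopology α]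
    [DenselyOrdered α] [LinearOrder β] [TopologicalSpace β] [OrderClosedTopology β]
    {f : α → β} {a b : α} (hab : a < b) (hf : AntitoneOn f (Ioo a b))
    (hc : ContinuousOn f (Icc a b)) : AntitoneOn f (Icc a b) :=
  MonotoneOn.Icc_of_Ioo (β := βᵒᵈ) hab hf hc

theorem IsPreconnected.forall_pos_or_forall_neg {X : Type*} [TopologicalSpace X] {s : Set X}
    {f : X → ℝ} (hs : IsPreconnected s) (hf : ContinuousOn f s) (h0 : ∀ x ∈ s, f x ≠ 0) :
    (∀ x ∈ s, 0 < f x) ∨ (∀ x ∈ s, f x < 0) := by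
  by_contra! hcon
  obtain ⟨⟨p, hp, hfp⟩, q, hq, hfq⟩ := hcon
  obtain ⟨c, hc, hfc⟩ := hs.intermediate_value hp hq hf ⟨hfp, hfq⟩
  exact h0 c hc hfc

variable {E : Type*} [NormedAddCommGroup E] [NormedSpace ℝ E] [CompleteSpace E]

namespace StieltjesFunction

variable (ψ : StieltjesFunction ℝ) {A B : ℝ} {h : ℝ → E}

/-- Both sides integrate `h t` over `A < s ≤ t ≤ B` against `dt ⊗ dψ(s)`, since
`ψ t - ψ A` is the `ψ`-mass of `(A, t]`. -/
theorem integral_Ioc_sub_smul_eq (hh : IntegrableOn h (Ioc A B)) :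
    ∫ t in Ioc A B, (ψ t - ψ A) • h t =
      ∫ s in Ioc A B, (∫ t in Ioc A B ∩ Ici s, h t) ∂ψ.measure := by
  have : IsFiniteMeasure (ψ.measure.restrict (Ioc A B)) :=
    isFiniteMeasure_restrict.2 (by simp [ψ.measure_Ioc])
  set k : ℝ → ℝ → E := fun t s => (Iic t).indicator (fun _ => h t) s
  have hk : Integrable (Function.uncurry k)
      ((volume.restrict (Ioc A B)).prod (ψ.measure.restrict (Ioc A B))) := by
    have : Function.uncurry k = {p : ℝ × ℝ | p.2 ≤ p.1}.indicator (fun p => h p.1) := by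
      ext p; simp [k, Function.uncurry, indicator_apply]
    rw [this]
    exact (hh.comp_fst _).indicator (measurableSet_le measurable_snd measurable_fst)
  calc ∫ t in Ioc A B, (ψ t - ψ A) • h t
      = ∫ t in Ioc A B, ∫ s in Ioc A B, k t s ∂ψ.measure := by
        refine setIntegral_congr_fun measurableSet_Ioc fun t ht => ?_
        rw [integral_indicator_const _ measurableSet_Iic, measureReal_def,
          Measure.restrict_apply measurableSet_Iic, Iic_inter_Ioc_of_le ht.2, ψ.measure_Ioc,
          ENNReal.toReal_ofReal (sub_nonneg.2 (ψ.mono ht.1.le))]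
    _ = ∫ s in Ioc A B, (∫ t in Ioc A B, k t s) ∂ψ.measure := integral_integral_swap hk
    _ = ∫ s in Ioc A B, (∫ t in Ioc A B ∩ Ici s, h t) ∂ψ.measure := by
        congr 1; ext s
        exact setIntegral_indicator measurableSet_Ici

theorem intervalIntegral_smul_eq (hAB : A ≤ B) (hh : IntervalIntegrable h volume A B) :
    ∫ t in A..B, ψ t • h t =
      ψ A • (∫ t in A..B, h t) + ∫ s in Ioc A B, (∫ t in s..B, h t) ∂ψ.measure := by
  rw [intervalIntegrable_iff_integrableOn_Ioc_of_le hAB] at hh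
  have hsub : IntegrableOn (fun t => (ψ t - ψ A) • h t) (Ioc A B) := by
    refine hh.bdd_smul (ψ B - ψ A) (ψ.mono.measurable.sub_const _).aestronglyMeasurable
      (ae_restrict_of_forall_mem measurableSet_Ioc fun t ht => ?_)
    rw [Real.norm_eq_abs, abs_of_nonneg (sub_nonneg.2 (ψ.mono ht.1.le))]
    exact sub_le_sub_right (ψ.mono ht.2) _
  have htail : ∀ s ∈ Ioc A B, ∫ t in Ioc A B ∩ Ici s, h t = ∫ t in s..B, h t := by
    intro s hs
    rw [intervalIntegral.integral_of_le hs.2, ← integral_Icc_eq_integral_Ioc]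
    congr 2
    ext t
    simp only [mem_inter_iff, mem_Ioc, mem_Ici, mem_Icc]
    constructor
    · rintro ⟨⟨-, htB⟩, hst⟩; exact ⟨hst, htB⟩
    · rintro ⟨hst, htB⟩; exact ⟨⟨hs.1.trans_le hst, htB⟩, hst⟩
  calc ∫ t in A..B, ψ t • h t
      = ∫ t in Ioc A B, (ψ A • h t + (ψ t - ψ A) • h t) := by
        rw [intervalIntegral.integral_of_le hAB]
        simp_rw [← add_smul, add_sub_cancel]
    _ = ψ A • (∫ t in A..B, h t) + ∫ t in Ioc A B, (ψ t - ψ A) • h t := by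
        rw [integral_add (f := fun t => ψ A • h t) (hh.smul (ψ A)) hsub, integral_smul,
          intervalIntegral.integral_of_le hAB]
    _ = _ := by
        rw [ψ.integral_Ioc_sub_smul_eq hh, setIntegral_congr_fun measurableSet_Ioc htail]

theorem norm_intervalIntegral_smul_le (hAB : A ≤ B) (hh : IntervalIntegrable h volume A B)
    {M : ℝ} (hM : ∀ s ∈ Icc A B, ‖∫ t in s..B, h t‖ ≤ M) :
    ‖∫ t in A..B, ψ t • h t‖ ≤ M * (|ψ A| + (ψ B - ψ A)) := by
  have hmass : ψ.measure.real (Ioc A B) = ψ B - ψ A := by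
    rw [measureReal_def, ψ.measure_Ioc, ENNReal.toReal_ofReal (sub_nonneg.2 (ψ.mono hAB))]
  rw [ψ.intervalIntegral_smul_eq hAB hh]
  calc _ ≤ ‖ψ A • ∫ t in A..B, h t‖ + ‖∫ s in Ioc A B, (∫ t in s..B, h t) ∂ψ.measure‖ :=
        norm_add_le _ _
    _ ≤ |ψ A| * M + M * ψ.measure.real (Ioc A B) := by
        gcongr
        · rw [norm_smul, Real.norm_eq_abs]
          exact mul_le_mul_of_nonneg_left (hM A ⟨le_rfl, hAB⟩) (abs_nonneg _)
        · exact norm_setIntegral_le_of_norm_le_const (by simp [ψ.measure_Ioc])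
            fun s hs => hM s (Ioc_subset_Icc_self hs)
    _ = M * (|ψ A| + (ψ B - ψ A)) := by rw [hmass]; ring

end StieltjesFunction

section MonotoneWeight

variable {ψ : ℝ → ℝ} {A B M : ℝ} {h : ℝ → E}

theorem MonotoneOn.exists_stieltjesFunction_eqOn (hψ : MonotoneOn ψ (Icc A B))
    (hψc : ContinuousOn ψ (Icc A B)) (hAB : A ≤ B) :
    ∃ F : StieltjesFunction ℝ, EqOn F ψ (Icc A B) :=
  ⟨{ toFun := IccExtend hAB ((Icc A B).domRestrict ψ)
     mono' := Monotone.IccExtend hAB fun x y hxy => hψ x.2 y.2 hxy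
     right_continuous' := fun _ => hψc.domRestrict.Icc_extend'.continuousWithinAt },
    fun _ hx => IccExtend_of_mem hAB ((Icc A B).domRestrict ψ) hx⟩

theorem MonotoneOn.norm_intervalIntegral_smul_le (hψ : MonotoneOn ψ (Icc A B))
    (hψc : ContinuousOn ψ (Icc A B)) (hAB : A ≤ B) (hh : IntervalIntegrable h volume A B)
    (hM : ∀ s ∈ Icc A B, ‖∫ t in s..B, h t‖ ≤ M) :
    ‖∫ t in A..B, ψ t • h t‖ ≤ M * (|ψ A| + (ψ B - ψ A)) := by
  obtain ⟨F, hF⟩ := hψ.exists_stieltjesFunction_eqOn hψc hAB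
  have hint : ∫ t in A..B, ψ t • h t = ∫ t in A..B, F t • h t :=
    intervalIntegral.integral_congr fun t ht => by
      rw [uIcc_of_le hAB] at ht; rw [hF ht]
  rw [hint, ← hF ⟨le_rfl, hAB⟩, ← hF ⟨hAB, le_rfl⟩]
  exact F.norm_intervalIntegral_smul_le hAB hh hM

theorem MonotoneOn.norm_intervalIntegral_smul_le' (hψ : MonotoneOn ψ (Icc A B))
    (hψc : ContinuousOn ψ (Icc A B)) (hAB : A ≤ B) (hh : IntervalIntegrable h volume A B)
    (hM : ∀ s ∈ Icc A B, ‖∫ t in A..s, h t‖ ≤ M) :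
    ‖∫ t in A..B, ψ t • h t‖ ≤ M * (|ψ B| + (ψ B - ψ A)) := by
  -- `t ↦ -ψ (A + B - t)` is again monotone, and reflection turns head integrals into tail ones.
  have hrefl : MapsTo (fun t => A + B - t) (Icc A B) (Icc A B) := fun t ht =>
    ⟨by linarith [ht.2], by linarith [ht.1]⟩
  have hmono : MonotoneOn (fun t => -ψ (A + B - t)) (Icc A B) := fun s hs t ht hst =>
    neg_le_neg (hψ (hrefl ht) (hrefl hs) (by linarith))
  have hcont : ContinuousOn (fun t => -ψ (A + B - t)) (Icc A B) :=
    (hψc.comp (by fun_prop) hrefl).neg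
  have hint : IntervalIntegrable (fun t => h (A + B - t)) volume A B := by
    simpa using (hh.comp_sub_left (A + B)).symm
  have hbound : ∀ s ∈ Icc A B, ‖∫ t in s..B, h (A + B - t)‖ ≤ M := fun s hs => by
    simpa [intervalIntegral.integral_comp_sub_left] using hM _ (hrefl hs)
  have key := hmono.norm_intervalIntegral_smul_le hcont hAB hint hbound
  have hflip : ∫ t in A..B, -ψ (A + B - t) • h (A + B - t) = -∫ t in A..B, ψ t • h t := by
    simp [neg_smul, intervalIntegral.integral_comp_sub_left (fun t => ψ t • h t)]
  rw [hflip, norm_neg] at key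
  simpa [abs_neg, sub_eq_add_neg, add_comm] using key

theorem MonotoneOn.norm_intervalIntegral_smul_le_max (hψ : MonotoneOn ψ (Icc A B))
    (hψc : ContinuousOn ψ (Icc A B))
    (hsign : (∀ t ∈ Icc A B, 0 ≤ ψ t) ∨ (∀ t ∈ Icc A B, ψ t ≤ 0)) (hAB : A ≤ B)
    (hh : IntervalIntegrable h volume A B)
    (hM : ∀ s ∈ Icc A B, ∀ t ∈ Icc A B, ‖∫ x in s..t, h x‖ ≤ M) :
    ‖∫ t in A..B, ψ t • h t‖ ≤ M * max |ψ A| |ψ B| := by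
  have hA : A ∈ Icc A B := ⟨le_rfl, hAB⟩
  have hB : B ∈ Icc A B := ⟨hAB, le_rfl⟩
  have hM0 : 0 ≤ M := by simpa using hM A hA A hA
  rcases hsign with hpos | hneg
  · calc _ ≤ M * (|ψ A| + (ψ B - ψ A)) :=
          hψ.norm_intervalIntegral_smul_le hψc hAB hh fun s hs => hM s hs B hB
      _ = M * |ψ B| := by rw [abs_of_nonneg (hpos A hA), abs_of_nonneg (hpos B hB)]; ring
      _ ≤ M * max |ψ A| |ψ B| := by gcongr; exact le_max_right _ _
  · calc _ ≤ M * (|ψ B| + (ψ B - ψ A)) :=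
          hψ.norm_intervalIntegral_smul_le' hψc hAB hh fun s hs => hM A hA s hs
      _ = M * |ψ A| := by rw [abs_of_nonpos (hneg A hA), abs_of_nonpos (hneg B hB)]; ring
      _ ≤ M * max |ψ A| |ψ B| := by gcongr; exact le_max_left _ _

theorem norm_intervalIntegral_smul_le_max_of_monotoneOn_or_antitoneOn
    (hψ : MonotoneOn ψ (Icc A B) ∨ AntitoneOn ψ (Icc A B)) (hψc : ContinuousOn ψ (Icc A B))
    (hsign : (∀ t ∈ Icc A B, 0 ≤ ψ t) ∨ (∀ t ∈ Icc A B, ψ t ≤ 0)) (hAB : A ≤ B)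
    (hh : IntervalIntegrable h volume A B)
    (hM : ∀ s ∈ Icc A B, ∀ t ∈ Icc A B, ‖∫ x in s..t, h x‖ ≤ M) :
    ‖∫ t in A..B, ψ t • h t‖ ≤ M * max |ψ A| |ψ B| := by
  rcases hψ with hmono | hanti
  · exact hmono.norm_intervalIntegral_smul_le_max hψc hsign hAB hh hM
  · have hsign' : (∀ t ∈ Icc A B, 0 ≤ -ψ t) ∨ (∀ t ∈ Icc A B, -ψ t ≤ 0) := by
      rcases hsign with hpos | hneg
      · exact Or.inr fun t ht => neg_nonpos.2 (hpos t ht)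
      · exact Or.inl fun t ht => neg_nonneg.2 (hneg t ht)
    simpa [neg_smul] using hanti.neg.norm_intervalIntegral_smul_le_max hψc.neg hsign' hAB hh hM

end MonotoneWeight

theorem norm_integral_mul_le_of_norm_primitive_le {f f' g : ℝ → ℂ} {a b C : ℝ} (hab : a ≤ b)
    (hfc : ContinuousOn f (Icc a b)) (hf' : ∀ t ∈ Ioo a b, HasDerivAt f (f' t) t)
    (hf'int : IntervalIntegrable f' volume a b) (hgc : ContinuousOn g (Icc a b))
    (hC : ∀ x ∈ Icc a b, ‖∫ t in a..x, g t‖ ≤ C) :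
    ‖∫ t in a..b, f t * g t‖ ≤ C * (‖f b‖ + ∫ t in a..b, ‖f' t‖) := by
  set G : ℝ → ℂ := fun x => ∫ t in a..x, g t
  have hGc : ContinuousOn G (Icc a b) := by
    have := intervalIntegral.continuousOn_primitive_interval (μ := volume)
      (by rw [uIcc_of_le hab]; exact hgc.integrableOn_Icc)
    rwa [uIcc_of_le hab] at this
  have hG' : ∀ x ∈ Ioo a b, HasDerivAt G (g x) x := fun x hx =>
    intervalIntegral.integral_hasDerivAt_right
      (hgc.mono (uIcc_subset_Icc (left_mem_Icc.2 hab) (Ioo_subset_Icc_self hx))).intervalIntegrable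
      ((hgc.mono Ioo_subset_Icc_self).stronglyMeasurableAtFilter isOpen_Ioo x hx)
      (hgc.continuousAt (Icc_mem_nhds hx.1 hx.2))
  have hparts : ∫ t in a..b, f t * g t = f b * G b - ∫ t in a..b, f' t * G t := by
    have := intervalIntegral.integral_mul_deriv_eq_deriv_mul_of_hasDerivAt (u := f) (v := G)
      (by rwa [uIcc_of_le hab]) (by rwa [uIcc_of_le hab])
      (by rwa [min_eq_left hab, max_eq_right hab]) (by rwa [min_eq_left hab, max_eq_right hab])
      hf'int (hgc.intervalIntegrable_of_Icc hab)
    simpa [G] using this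
  calc ‖∫ t in a..b, f t * g t‖ ≤ ‖f b * G b‖ + ‖∫ t in a..b, f' t * G t‖ := by
        rw [hparts]; exact norm_sub_le _ _
    _ ≤ ‖f b‖ * C + ∫ t in a..b, ‖f' t‖ * C := by
        gcongr
        · rw [norm_mul]
          exact mul_le_mul_of_nonneg_left (hC b (right_mem_Icc.2 hab)) (norm_nonneg _)
        · refine intervalIntegral.norm_integral_le_of_norm_le hab
            (Filter.Eventually.of_forall fun t ht => ?_) (hf'int.norm.mul_const C)
          rw [norm_mul]
          exact mul_le_mul_of_nonneg_left (hC t (Ioc_subset_Icc_self ht)) (norm_nonneg _)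
    _ = C * (‖f b‖ + ∫ t in a..b, ‖f' t‖) := by
        rw [intervalIntegral.integral_mul_const]; ring

theorem norm_integral_deriv_mul_cexp_le {u u' : ℝ → ℝ} {s t lam : ℝ} (hlam : 0 < lam)
    (hu : ∀ x ∈ uIcc s t, HasDerivAt u (u' x) x) (hu'c : ContinuousOn u' (uIcc s t)) :
    ‖∫ x in s..t, (u' x : ℂ) * cexp (I * lam * u x)‖ ≤ 2 * lam⁻¹ := by
  have hIlam : I * (lam : ℂ) ≠ 0 := mul_ne_zero I_ne_zero (ofReal_ne_zero.2 hlam.ne')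
  have hnorm : ∀ x, ‖cexp (I * lam * u x) / (I * lam)‖ = lam⁻¹ := fun x => by
    rw [norm_div, show I * (lam : ℂ) * u x = ((lam * u x : ℝ) : ℂ) * I by push_cast; ring,
      norm_exp_ofReal_mul_I, norm_mul, norm_I, norm_real, Real.norm_of_nonneg hlam.le, one_mul,
      one_div]
  have hderiv : ∀ x ∈ uIcc s t, HasDerivAt (fun y => cexp (I * lam * u y) / (I * lam))
      ((u' x : ℂ) * cexp (I * lam * u x)) x := fun x hx => by
    refine (((hu x hx).ofReal_comp.const_mul (I * lam)).cexp.div_const (I * lam)).congr_deriv ?_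
    rw [mul_div_assoc, mul_div_cancel_left₀ _ hIlam, mul_comm]
  have hcont : ContinuousOn (fun x => (u' x : ℂ) * cexp (I * lam * u x)) (uIcc s t) := by
    have : ContinuousOn u (uIcc s t) := fun x hx => (hu x hx).continuousAt.continuousWithinAt
    fun_prop
  rw [intervalIntegral.integral_eq_sub_of_hasDerivAt hderiv hcont.intervalIntegrable]
  calc _ ≤ ‖cexp (I * lam * u t) / (I * lam)‖ + ‖cexp (I * lam * u s) / (I * lam)‖ :=
        norm_sub_le _ _
    _ = 2 * lam⁻¹ := by rw [hnorm, hnorm]; ring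

theorem norm_integral_cexp_le {u u' : ℝ → ℝ} {a b lam : ℝ} (hab : a ≤ b) (hlam : 0 < lam)
    (hu : ∀ t ∈ Icc a b, HasDerivAt u (u' t) t) (hu'c : ContinuousOn u' (Icc a b))
    (hu'1 : ∀ t ∈ Icc a b, 1 ≤ |u' t|)
    (hu'mono : MonotoneOn u' (Icc a b) ∨ AntitoneOn u' (Icc a b)) :
    ‖∫ t in a..b, cexp (I * lam * u t)‖ ≤ 2 * lam⁻¹ := by
  have hne : ∀ t ∈ Icc a b, u' t ≠ 0 := fun t ht h0 => by
    have := hu'1 t ht; rw [h0, abs_zero] at this; linarith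
  -- `u'` has constant sign, and inversion is antitone on each sign.
  obtain ⟨S, hS, hmaps, hsign⟩ : ∃ S : Set ℝ, AntitoneOn (·⁻¹) S ∧ MapsTo u' (Icc a b) S ∧
      ((∀ y ∈ S, 0 ≤ y⁻¹) ∨ (∀ y ∈ S, y⁻¹ ≤ 0)) := by
    rcases isPreconnected_Icc.forall_pos_or_forall_neg hu'c hne with hpos | hneg
    · exact ⟨Ioi 0, inv_antitoneOn_Ioi, hpos, Or.inl fun y hy => inv_nonneg.2 (le_of_lt hy)⟩
    · exact ⟨Iio 0, inv_antitoneOn_Iio, hneg, Or.inr fun y hy => inv_nonpos.2 (le_of_lt hy)⟩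
  set ψ : ℝ → ℝ := fun t => (u' t)⁻¹
  set h : ℝ → ℂ := fun t => (u' t : ℂ) * cexp (I * lam * u t)
  have hψmono : MonotoneOn ψ (Icc a b) ∨ AntitoneOn ψ (Icc a b) :=
    hu'mono.symm.imp (hS.comp · hmaps) (hS.comp_MonotoneOn · hmaps)
  have hψsign : (∀ t ∈ Icc a b, 0 ≤ ψ t) ∨ (∀ t ∈ Icc a b, ψ t ≤ 0) :=
    hsign.imp (fun hS t ht => hS _ (hmaps ht)) (fun hS t ht => hS _ (hmaps ht))
  have hψ1 : max |ψ a| |ψ b| ≤ 1 :=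
    max_le (by simpa [ψ] using inv_le_one_of_one_le₀ (hu'1 a (left_mem_Icc.2 hab)))
      (by simpa [ψ] using inv_le_one_of_one_le₀ (hu'1 b (right_mem_Icc.2 hab)))
  have hcont : ContinuousOn h (Icc a b) := by
    have : ContinuousOn u (Icc a b) := fun x hx => (hu x hx).continuousAt.continuousWithinAt
    fun_prop
  have hsplit : ∫ t in a..b, cexp (I * lam * u t) = ∫ t in a..b, ψ t • h t := by
    refine intervalIntegral.integral_congr fun t ht => ?_
    rw [uIcc_of_le hab] at ht
    simp only [ψ, h, real_smul, ofReal_inv]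
    field_simp [ofReal_ne_zero.2 (hne t ht)]
  rw [hsplit]
  calc _ ≤ 2 * lam⁻¹ * max |ψ a| |ψ b| :=
        norm_intervalIntegral_smul_le_max_of_monotoneOn_or_antitoneOn hψmono (hu'c.inv₀ hne)
          hψsign hab (hcont.intervalIntegrable_of_Icc hab) fun s hs t ht =>
            norm_integral_deriv_mul_cexp_le hlam (fun x hx => hu x (uIcc_subset_Icc hs ht hx))
              (hu'c.mono (uIcc_subset_Icc hs ht))
    _ ≤ 2 * lam⁻¹ := mul_le_of_le_one_right (by positivity) hψ1

theorem stmt_3 (a b : ℝ) (hab : a < b) (lam : ℝ) (hlam : 1 ≤ lam)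
    (f f' : ℝ → ℂ) (u u' : ℝ → ℝ)
    (hfc : ContinuousOn f (Set.Icc a b))
    (hf' : ∀ t ∈ Set.Ioo a b, HasDerivAt f (f' t) t)
    (hf'int : IntervalIntegrable f' MeasureTheory.volume a b)
    (hu : ∀ t ∈ Set.Icc a b, HasDerivAt u (u' t) t)
    (hu'c : ContinuousOn u' (Set.Icc a b))
    (hu'1 : ∀ t ∈ Set.Ioo a b, 1 ≤ |u' t|)
    (hu'mono : MonotoneOn u' (Set.Ioo a b) ∨ AntitoneOn u' (Set.Ioo a b)) :
    ‖∫ t in a..b, f t * Complex.exp (Complex.I * lam * u t)‖ ≤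
      3 * lam⁻¹ * (‖f b‖ + ∫ t in a..b, ‖f' t‖) := by
  have hu'1' : ∀ t ∈ Icc a b, 1 ≤ |u' t| := by
    have h := MapsTo.closure_of_continuousOn (f := u') (t := {y : ℝ | 1 ≤ |y|}) hu'1
      (by rwa [closure_Ioo hab.ne])
    rwa [closure_Ioo hab.ne, (isClosed_le continuous_const continuous_abs).closure_eq] at h
  have hmono : MonotoneOn u' (Icc a b) ∨ AntitoneOn u' (Icc a b) :=
    hu'mono.imp (·.Icc_of_Ioo hab hu'c) (·.Icc_of_Ioo hab hu'c)
  have hprimitive : ∀ x ∈ Icc a b, ‖∫ t in a..x, cexp (I * lam * u t)‖ ≤ 2 * lam⁻¹ := by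
    intro x hx
    have hsub : Icc a x ⊆ Icc a b := Icc_subset_Icc_right hx.2
    exact norm_integral_cexp_le hx.1 (by linarith) (fun t ht => hu t (hsub ht)) (hu'c.mono hsub)
      (fun t ht => hu'1' t (hsub ht)) (hmono.imp (·.mono hsub) (·.mono hsub))
  have hcont : ContinuousOn (fun t => cexp (I * lam * u t)) (Icc a b) := by
    have : ContinuousOn u (Icc a b) := fun x hx => (hu x hx).continuousAt.continuousWithinAt
    fun_prop
  have hvar : 0 ≤ ‖f b‖ + ∫ t in a..b, ‖f' t‖ :=
    add_nonneg (norm_nonneg _) (intervalIntegral.integral_nonneg hab.le fun _ _ => norm_nonneg _)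
  calc _ ≤ 2 * lam⁻¹ * (‖f b‖ + ∫ t in a..b, ‖f' t‖) :=
        norm_integral_mul_le_of_norm_primitive_le hab.le hfc hf' hf'int hcont hprimitive
    _ ≤ 3 * lam⁻¹ * (‖f b‖ + ∫ t in a..b, ‖f' t‖) := by
        gcongr
        norm_num
end

section
/- Let κ ∈ (0,1) and for ξ ∈ (-κ, κ) define μ_s(ξ) = √(1-ξ²), μ_p(ξ) = √(κ²-ξ²), β(ξ) = 1 - 2ξ², δ(ξ) = β(ξ)² + 4ξ²μ_s(ξ)μ_p(ξ). Then δ(ξ) ≤ 1 for all ξ ∈ (-κ,κ), and consequently ∫_{-κ}^{κ} μ_s(ξ)/δ(ξ) dξ ≥ ∫_{-κ}^{κ} μ_p(ξ) dξ = πκ²/2. -/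
set_option maxHeartbeats 1000000

open Real intervalIntegral

lemma aux_inv_sqrt (t : ℝ) : 1 / Real.sqrt t = t ^ (-(1/2) : ℝ) := by
  rcases lt_trichotomy t 0 with h|h|h
  · rw [Real.sqrt_eq_zero'.mpr h.le, Real.rpow_def_of_neg h,
      show (-(1/2) : ℝ) * π = -(π/2) by ring, Real.cos_neg, Real.cos_pi_div_two]
    simp
  · subst h; simp [Real.zero_rpow (by norm_num : (-(1/2):ℝ) ≠ 0)]
  · rw [Real.rpow_neg h.le, ← Real.sqrt_eq_rpow, one_div]

theorem stmt_17 (κ : ℝ) (hκ0 : 0 < κ) (hκ1 : κ < 1)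
    (δ : ℝ → ℝ)
    (hδ : ∀ ξ : ℝ, δ ξ = (1 - 2*ξ^2)^2 +
      4*ξ^2 * Real.sqrt (1 - ξ^2) * Real.sqrt (κ^2 - ξ^2)) :
    (∀ ξ ∈ Set.Ioo (-κ) κ, δ ξ ≤ 1) ∧
    (∫ ξ in (-κ)..κ, Real.sqrt (κ^2 - ξ^2)) = π * κ^2 / 2 ∧
    π * κ^2 / 2 ≤ ∫ ξ in (-κ)..κ, Real.sqrt (1 - ξ^2) / δ ξ := by
  have hκ2 : κ^2 < 1 := by nlinarith
  -- Part 1 and positivity of δ on the open interval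
  have hsq : ∀ ξ : ℝ, ξ ∈ Set.Ioo (-κ) κ → ξ^2 < κ^2 := by
    intro ξ hξ
    have := abs_lt.mpr ⟨hξ.1, hξ.2⟩
    nlinarith [abs_nonneg ξ, sq_abs ξ]
  have part1 : ∀ ξ ∈ Set.Ioo (-κ) κ, δ ξ ≤ 1 := by
    intro ξ hξ
    have h2 : ξ^2 < κ^2 := hsq ξ hξ
    have hs1 : Real.sqrt (κ^2 - ξ^2) ≤ Real.sqrt (1 - ξ^2) :=
      Real.sqrt_le_sqrt (by nlinarith)
    have hs2 : Real.sqrt (1 - ξ^2) ^ 2 = 1 - ξ^2 := Real.sq_sqrt (by nlinarith)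
    have hs3 : (0:ℝ) ≤ Real.sqrt (1 - ξ^2) := Real.sqrt_nonneg _
    rw [hδ]
    nlinarith [mul_le_mul_of_nonneg_left hs1
      (mul_nonneg (by positivity : (0:ℝ) ≤ 4*ξ^2) hs3), sq_nonneg ξ]
  have hδpos : ∀ ξ ∈ Set.Ioo (-κ) κ, 0 < δ ξ := by
    intro ξ hξ
    have h2 : ξ^2 < κ^2 := hsq ξ hξ
    have hp : 0 < Real.sqrt (κ^2 - ξ^2) := Real.sqrt_pos.mpr (by nlinarith)
    have hs : 0 < Real.sqrt (1 - ξ^2) := Real.sqrt_pos.mpr (by nlinarith)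
    rw [hδ]
    rcases eq_or_ne ξ 0 with h|h
    · subst h; norm_num
    · have h4 : 0 < 4*ξ^2 := by positivity
      nlinarith [sq_nonneg (1 - 2*ξ^2), mul_pos (mul_pos h4 hs) hp]
  have hδnn : ∀ ξ : ℝ, 0 ≤ δ ξ := by
    intro ξ
    rw [hδ]
    have := Real.sqrt_nonneg (1 - ξ^2)
    have := Real.sqrt_nonneg (κ^2 - ξ^2)
    positivity
  -- Part 2
  have part2 : (∫ ξ in (-κ)..κ, Real.sqrt (κ^2 - ξ^2)) = π * κ^2 / 2 := by
    have hκne : κ ≠ 0 := ne_of_gt hκ0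
    have key : ∀ x : ℝ, Real.sqrt (κ^2 - (κ*x)^2) = κ * Real.sqrt (1 - x^2) := by
      intro x
      rw [show κ^2 - (κ*x)^2 = κ^2 * (1 - x^2) by ring, Real.sqrt_mul (sq_nonneg κ),
        Real.sqrt_sq hκ0.le]
    have h := intervalIntegral.integral_comp_mul_left
      (a := (-1:ℝ)) (b := 1) (fun x => Real.sqrt (κ^2 - x^2)) hκne
    simp only [key, mul_neg_one, mul_one] at h
    rw [intervalIntegral.integral_const_mul, integral_sqrt_one_sub_sq] at h
    rw [smul_eq_mul] at h
    have : ∫ ξ in (-κ)..κ, Real.sqrt (κ^2 - ξ^2) = κ * (κ * (π/2)) := by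
      field_simp at h
      linarith
    rw [this]; ring
  refine ⟨part1, part2, ?_⟩
  -- Part 3
  have hab : (-κ) ≤ κ := by linarith
  have hcont1 : Continuous (fun ξ : ℝ => Real.sqrt (κ^2 - ξ^2)) :=
    Real.continuous_sqrt.comp (by fun_prop)
  have hcont2 : Continuous (fun ξ : ℝ => Real.sqrt (1 - ξ^2)) :=
    Real.continuous_sqrt.comp (by fun_prop)
  have hcont3 : Continuous (fun ξ : ℝ =>
      (1 - 2*ξ^2)^2 + 4*ξ^2 * Real.sqrt (1 - ξ^2) * Real.sqrt (κ^2 - ξ^2)) := by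
    fun_prop
  have hf : IntervalIntegrable (fun ξ => Real.sqrt (κ^2 - ξ^2)) MeasureTheory.volume (-κ) κ :=
    hcont1.intervalIntegrable _ _
  -- dominating function
  set H : ℝ → ℝ := fun ξ => 4 + (1/Real.sqrt κ) * (1/Real.sqrt (κ - ξ) + 1/Real.sqrt (κ + ξ))
    with hH
  have hH1 : IntervalIntegrable (fun ξ => 1/Real.sqrt (κ - ξ)) MeasureTheory.volume (-κ) κ := by
    have : (fun ξ : ℝ => 1/Real.sqrt (κ - ξ)) = fun ξ => (κ - ξ) ^ (-(1/2) : ℝ) :=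
      funext fun ξ => aux_inv_sqrt _
    rw [this]
    have := (intervalIntegrable_rpow' (a := 2*κ) (b := 0)
      (r := (-(1/2):ℝ)) (by norm_num)).comp_sub_left κ
    simpa [show κ - 2*κ = -κ by ring] using this
  have hH2 : IntervalIntegrable (fun ξ => 1/Real.sqrt (κ + ξ)) MeasureTheory.volume (-κ) κ := by
    have : (fun ξ : ℝ => 1/Real.sqrt (κ + ξ)) = fun ξ => (κ + ξ) ^ (-(1/2) : ℝ) :=
      funext fun ξ => aux_inv_sqrt _
    rw [this]
    have := (intervalIntegrable_rpow' (a := 0) (b := 2*κ)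
      (r := (-(1/2):ℝ)) (by norm_num)).comp_add_left κ
    simpa [show 2*κ - κ = κ by ring] using this
  have hHint : IntervalIntegrable H MeasureTheory.volume (-κ) κ := by
    exact (_root_.intervalIntegrable_const (c := (4:ℝ))).add (((hH1.add hH2).const_mul _))
  -- measurability of g
  have hgm : (fun ξ => Real.sqrt (1 - ξ^2) / δ ξ) =
      fun ξ => Real.sqrt (1 - ξ^2) /
        ((1 - 2*ξ^2)^2 + 4*ξ^2 * Real.sqrt (1 - ξ^2) * Real.sqrt (κ^2 - ξ^2)) :=
    funext fun ξ => by rw [hδ]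
  have hmeas : MeasureTheory.AEStronglyMeasurable (fun ξ => Real.sqrt (1 - ξ^2) / δ ξ)
      (MeasureTheory.volume.restrict (Set.uIoc (-κ) κ)) := by
    rw [hgm]
    exact ((hcont2.measurable.div hcont3.measurable).aestronglyMeasurable)
  -- a.e. bound
  have hne : ∀ᵐ x : ℝ ∂MeasureTheory.volume, x ≠ κ := by
    rw [MeasureTheory.ae_iff]
    simpa [Set.setOf_eq_eq_singleton] using MeasureTheory.measure_singleton (μ := MeasureTheory.volume) κ
  have hbound : ∀ x ∈ Set.Ioo (-κ) κ, Real.sqrt (1 - x^2) / δ x ≤ H x := by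
    intro x hx
    have h2 : x^2 < κ^2 := hsq x hx
    have hd1 : δ x ≤ 1 := part1 x hx
    have hd0 : 0 < δ x := hδpos x hx
    have hs : 0 < Real.sqrt (1 - x^2) := Real.sqrt_pos.mpr (by nlinarith)
    have hp : 0 < Real.sqrt (κ^2 - x^2) := Real.sqrt_pos.mpr (by nlinarith)
    have hs1 : Real.sqrt (1 - x^2) ≤ 1 := Real.sqrt_le_one.mpr (by nlinarith)
    have hax : 0 < κ - x := by linarith [hx.2]
    have hbx : 0 < κ + x := by linarith [hx.1]
    have hrest : 0 ≤ (1/Real.sqrt κ) * (1/Real.sqrt (κ - x) + 1/Real.sqrt (κ + x)) := by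
      positivity
    rcases le_or_gt (x^2) (1/4) with hc|hc
    · -- δ ≥ 1/4, so quotient ≤ 4
      have hd : (1:ℝ)/4 ≤ δ x := by
        rw [hδ]
        have := mul_nonneg (mul_nonneg (by positivity : (0:ℝ) ≤ 4*x^2) hs.le) hp.le
        nlinarith [sq_nonneg (1 - 2*x^2)]
      have : Real.sqrt (1 - x^2) / δ x ≤ 4 := by
        rw [div_le_iff₀ hd0]; nlinarith
      linarith
    · -- δ ≥ sqrt(1-x²)·sqrt(κ²-x²), so quotient ≤ 1/sqrt(κ²-x²)
      have hd : Real.sqrt (1 - x^2) * Real.sqrt (κ^2 - x^2) ≤ δ x := by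
        rw [hδ]
        nlinarith [sq_nonneg (1 - 2*x^2), mul_pos hs hp]
      have step1 : Real.sqrt (1 - x^2) / δ x ≤ 1 / Real.sqrt (κ^2 - x^2) := by
        rw [div_le_div_iff₀ hd0 hp]
        calc Real.sqrt (1 - x^2) * Real.sqrt (κ^2 - x^2) ≤ δ x := hd
          _ = 1 * δ x := (one_mul _).symm
      have hsplit : Real.sqrt (κ^2 - x^2) = Real.sqrt (κ - x) * Real.sqrt (κ + x) := by
        rw [← Real.sqrt_mul hax.le]; ring_nf
      have step2 : 1 / Real.sqrt (κ^2 - x^2) ≤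
          (1/Real.sqrt κ) * (1/Real.sqrt (κ - x) + 1/Real.sqrt (κ + x)) := by
        have hpa : 0 < Real.sqrt (κ - x) := Real.sqrt_pos.mpr hax
        have hpb : 0 < Real.sqrt (κ + x) := Real.sqrt_pos.mpr hbx
        have hpk : 0 < Real.sqrt κ := Real.sqrt_pos.mpr hκ0
        rcases le_or_gt 0 x with hx0|hx0
        · have hκb : Real.sqrt κ ≤ Real.sqrt (κ + x) := Real.sqrt_le_sqrt (by linarith)
          have h1 : 1 / Real.sqrt (κ^2 - x^2) ≤ 1 / (Real.sqrt κ * Real.sqrt (κ - x)) := by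
            apply one_div_le_one_div_of_le (by positivity)
            rw [hsplit]
            nlinarith
          have h2' : (1:ℝ) / (Real.sqrt κ * Real.sqrt (κ - x)) =
              (1/Real.sqrt κ) * (1/Real.sqrt (κ - x)) := by ring
          have h3 : 0 ≤ (1/Real.sqrt κ) * (1/Real.sqrt (κ + x)) := by positivity
          rw [h2'] at h1
          nlinarith [h1, h3]
        · have hκb : Real.sqrt κ ≤ Real.sqrt (κ - x) := Real.sqrt_le_sqrt (by linarith)
          have h1 : 1 / Real.sqrt (κ^2 - x^2) ≤ 1 / (Real.sqrt κ * Real.sqrt (κ + x)) := by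
            apply one_div_le_one_div_of_le (by positivity)
            rw [hsplit]
            nlinarith
          have h2' : (1:ℝ) / (Real.sqrt κ * Real.sqrt (κ + x)) =
              (1/Real.sqrt κ) * (1/Real.sqrt (κ + x)) := by ring
          have h3 : 0 ≤ (1/Real.sqrt κ) * (1/Real.sqrt (κ - x)) := by positivity
          rw [h2'] at h1
          nlinarith [h1, h3]
      calc Real.sqrt (1 - x^2) / δ x ≤ 1 / Real.sqrt (κ^2 - x^2) := step1
        _ ≤ (1/Real.sqrt κ) * (1/Real.sqrt (κ - x) + 1/Real.sqrt (κ + x)) := step2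
        _ ≤ H x := by simp only [hH]; linarith
  have hg : IntervalIntegrable (fun ξ => Real.sqrt (1 - ξ^2) / δ ξ)
      MeasureTheory.volume (-κ) κ := by
    apply hHint.mono_fun' hmeas
    have hmem := MeasureTheory.ae_restrict_mem (μ := MeasureTheory.volume) (measurableSet_uIoc (a := -κ) (b := κ))
    have hne' : ∀ᵐ x : ℝ ∂(MeasureTheory.volume.restrict (Set.uIoc (-κ) κ)), x ≠ κ :=
      hne.filter_mono (MeasureTheory.ae_mono MeasureTheory.Measure.restrict_le_self)
    filter_upwards [hmem, hne'] with x hx hxne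
    have hx' : x ∈ Set.Ioo (-κ) κ := by
      rw [Set.uIoc_of_le hab] at hx
      exact ⟨hx.1, lt_of_le_of_ne hx.2 hxne⟩
    have h0 : 0 ≤ Real.sqrt (1 - x^2) / δ x := div_nonneg (Real.sqrt_nonneg _) (hδnn x)
    calc ‖Real.sqrt (1 - x^2) / δ x‖ = Real.sqrt (1 - x^2) / δ x := by
          rw [Real.norm_eq_abs, abs_of_nonneg h0]
      _ ≤ H x := hbound x hx'
  have hle : ∀ x ∈ Set.Icc (-κ) κ, Real.sqrt (κ^2 - x^2) ≤ Real.sqrt (1 - x^2) / δ x := by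
    intro x hx
    rcases eq_or_lt_of_le hx.1 with h1|h1
    · rw [← h1, show κ^2 - (-κ)^2 = 0 by ring, Real.sqrt_zero]
      exact div_nonneg (Real.sqrt_nonneg _) (hδnn _)
    rcases eq_or_lt_of_le hx.2 with h2|h2
    · rw [h2, show κ^2 - κ^2 = 0 by ring, Real.sqrt_zero]
      exact div_nonneg (Real.sqrt_nonneg _) (hδnn _)
    have hx' : x ∈ Set.Ioo (-κ) κ := ⟨h1, h2⟩
    have hd1 := part1 x hx'
    have hd0 := hδpos x hx'
    have hsq' := hsq x hx'
    calc Real.sqrt (κ^2 - x^2) ≤ Real.sqrt (1 - x^2) := Real.sqrt_le_sqrt (by nlinarith)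
      _ ≤ Real.sqrt (1 - x^2) / δ x := by
          rw [le_div_iff₀ hd0]
          nlinarith [Real.sqrt_nonneg (1 - x^2)]
  calc π * κ^2 / 2 = ∫ ξ in (-κ)..κ, Real.sqrt (κ^2 - ξ^2) := part2.symm
    _ ≤ ∫ ξ in (-κ)..κ, Real.sqrt (1 - ξ^2) / δ ξ :=
        intervalIntegral.integral_mono_on hab hf hg hle
end
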